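/- arXiv:2408.12785 — 2 statements merged into one kernel-verified Lean document; each statement's English description precedes it below -/
import Mathlib

section
/- Let A ⊆ ℕ. The following are equivalent: (1) A is dynamically central syndetic; (2) there exists a subset B ⊆ A such that for every finite subset F ⊆ B the set B ∩ ⋂_{f ∈ F} (B − f) is syndetic; (3) A belongs to a syndetic, idempotent filter on ℕ. -/
open Set

/-- `A − n` computed inside the positive integers. -/
def shiftN (A : Set ℕ+) (n : ℕ+) : Set ℕ+ := {m : ℕ+ | m + n ∈ A}

/-- `A − B := ⋃_{b ∈ B} (A − b)`. -/
def shiftSet (A B : Set ℕ+) : Set ℕ+ := ⋃ b ∈ B, shiftN A b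

/-- A set of positive integers is syndetic if `A ∪ (A−1) ∪ ⋯ ∪ (A−N) = ℕ` for some `N`. -/
def Syndetic (A : Set ℕ+) : Prop :=
  ∃ N : ℕ+, (A ∪ ⋃ k ∈ {k : ℕ+ | k ≤ N}, shiftN A k) = Set.univ

/-- A set of positive integers is thick if it contains a translate of every finite set. -/
def Thick (A : Set ℕ+) : Prop :=
  ∀ F : Finset ℕ+, ∃ n : ℕ+, ∀ f ∈ F, f + n ∈ A

/-- Piecewise syndetic: some finite union of translates `A ∪ (A−1) ∪ ⋯ ∪ (A−N)` is thick. -/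
def PiecewiseSyndetic (A : Set ℕ+) : Prop :=
  ∃ N : ℕ+, Thick (A ∪ ⋃ k ∈ {k : ℕ+ | k ≤ N}, shiftN A k)

/-- A self-map of a topological space is minimal if every forward orbit
`{T^n x | n ∈ ℕ, n ≥ 1}` is dense. -/
def MinimalMap {X : Type} [TopologicalSpace X] (T : X → X) : Prop :=
  ∀ x : X, Dense (Set.range fun n : ℕ+ => T^[(n : ℕ)] x)

/-- A minimal topological dynamical system: a nonempty compact metric space together with a
continuous map all of whose forward orbits are dense. -/
structure MinSystem : Type 1 where
  X : Type
  [met : MetricSpace X]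
  [cpt : CompactSpace X]
  [nem : Nonempty X]
  T : X → X
  cont : Continuous T
  minimal : MinimalMap T

attribute [instance] MinSystem.met MinSystem.cpt MinSystem.nem

/-- `R(x,U)`: the set of (positive) return times of `x` to `U`. -/
def retTimes {X : Type} (T : X → X) (x : X) (U : Set X) : Set ℕ+ :=
  {n : ℕ+ | T^[(n : ℕ)] x ∈ U}

/-- Dynamically syndetic sets. -/
def DynSyndetic (A : Set ℕ+) : Prop :=
  ∃ (S : MinSystem) (x : S.X) (U : Set S.X),
    IsOpen U ∧ U.Nonempty ∧ retTimes S.T x U ⊆ A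

/-- Dynamically central syndetic sets. -/
def DynCentralSyndetic (A : Set ℕ+) : Prop :=
  ∃ (S : MinSystem) (x : S.X) (U : Set S.X),
    IsOpen U ∧ x ∈ U ∧ retTimes S.T x U ⊆ A

/-- Dynamically thick sets: `{T^n x | n ∈ A}` is dense for every minimal system and point. -/
def DynThick (A : Set ℕ+) : Prop :=
  ∀ (S : MinSystem) (x : S.X), Dense ((fun n : ℕ+ => S.T^[(n : ℕ)] x) '' A)

/-- Sets of (minimal topological) pointwise recurrence. -/
def PointwiseRecurrent (A : Set ℕ+) : Prop :=
  ∀ (S : MinSystem) (x : S.X) (U : Set S.X), IsOpen U → x ∈ U →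
    ∃ a ∈ A, S.T^[(a : ℕ)] x ∈ U

/-- A family: an upward-closed collection of subsets of the positive integers. -/
def UpwardClosed (F : Set (Set ℕ+)) : Prop :=
  ∀ ⦃A B : Set ℕ+⦄, A ∈ F → A ⊆ B → B ∈ F

/-- A filter (in the combinatorial sense): an upward-closed collection closed under
finite intersections. -/
def IsFilterFamily (F : Set (Set ℕ+)) : Prop :=
  UpwardClosed F ∧ ∀ ⦃A B : Set ℕ+⦄, A ∈ F → B ∈ F → A ∩ B ∈ F

/-- A family all of whose members are syndetic. -/
def SyndeticFamily (F : Set (Set ℕ+)) : Prop := ∀ A ∈ F, Syndetic A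

/-- `A − 𝔉 := {n | A − n ∈ 𝔉}`. -/
def famShift (A : Set ℕ+) (F : Set (Set ℕ+)) : Set ℕ+ := {n : ℕ+ | shiftN A n ∈ F}

/-- `𝔉 + 𝔊 := {A | A − 𝔊 ∈ 𝔉}`. -/
def famSum (F G : Set (Set ℕ+)) : Set (Set ℕ+) := {A : Set ℕ+ | famShift A G ∈ F}

/-- A family is idempotent if `𝔉 ⊆ 𝔉 + 𝔉`. -/
def IdempotentFamily (F : Set (Set ℕ+)) : Prop := F ⊆ famSum F F

/-- A proper family: nonempty and not containing the empty set. -/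
def ProperFamily (F : Set (Set ℕ+)) : Prop := F.Nonempty ∧ ∅ ∉ F


section Aux

lemma syndetic_mono {A B : Set ℕ+} (h : Syndetic A) (hAB : A ⊆ B) : Syndetic B := by
  obtain ⟨N, hN⟩ := h
  refine ⟨N, Set.eq_univ_of_univ_subset ?_⟩
  rw [← hN]
  apply Set.union_subset_union hAB
  exact Set.iUnion₂_mono (fun k hk => fun m hm => hAB hm)

/-- the combinatorial core set `B_F`. -/
def BF (B : Set ℕ+) (F : Finset ℕ+) : Set ℕ+ := B ∩ ⋂ f ∈ F, shiftN B f

lemma mem_BF {B : Set ℕ+} {F : Finset ℕ+} {m : ℕ+} :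
    m ∈ BF B F ↔ m ∈ B ∧ ∀ f ∈ F, m + f ∈ B := by
  simp [BF, shiftN]

/-- (2) ⇒ (3) -/
lemma two_imp_three {A B : Set ℕ+} (hBA : B ⊆ A)
    (h : ∀ F : Finset ℕ+, (F : Set ℕ+) ⊆ B → Syndetic (B ∩ ⋂ f ∈ F, shiftN B f)) :
    ∃ 𝓕 : Set (Set ℕ+),
      IsFilterFamily 𝓕 ∧ SyndeticFamily 𝓕 ∧ IdempotentFamily 𝓕 ∧ A ∈ 𝓕 := by
  refine ⟨{C | ∃ F : Finset ℕ+, (F : Set ℕ+) ⊆ B ∧ BF B F ⊆ C}, ⟨?_, ?_⟩, ?_, ?_, ?_⟩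
  · rintro C D ⟨F, hF, hFC⟩ hCD; exact ⟨F, hF, hFC.trans hCD⟩
  · rintro C D ⟨F, hF, hFC⟩ ⟨G, hG, hGD⟩
    refine ⟨F ∪ G, ?_, ?_⟩
    · push_cast; exact Set.union_subset hF hG
    · intro m hm
      rw [mem_BF] at hm
      exact ⟨hFC (mem_BF.2 ⟨hm.1, fun f hf => hm.2 f (Finset.mem_union_left _ hf)⟩),
        hGD (mem_BF.2 ⟨hm.1, fun f hf => hm.2 f (Finset.mem_union_right _ hf)⟩)⟩
  · rintro C ⟨F, hF, hFC⟩
    exact syndetic_mono (h F hF) hFC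
  · rintro C ⟨F, hF, hFC⟩
    refine ⟨F, hF, ?_⟩
    intro n hn
    rw [mem_BF] at hn
    refine ⟨insert n (F.image (· + n)), ?_, ?_⟩
    · intro f hf
      simp only [Finset.coe_insert, Set.mem_insert_iff, Finset.coe_image, Set.mem_image] at hf
      rcases hf with rfl | ⟨g, hg, rfl⟩
      · exact hn.1
      · have := hn.2 g (by simpa using hg)
        rwa [add_comm] at this
    · intro m hm
      rw [mem_BF] at hm
      have hmB : m ∈ B := hm.1
      have h1 : m + n ∈ B := hm.2 n (Finset.mem_insert_self _ _)
      have h2 : ∀ f ∈ F, (m + n) + f ∈ B := by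
        intro f hf
        have := hm.2 (f + n) (Finset.mem_insert_of_mem (Finset.mem_image_of_mem _ hf))
        rw [show m + (f + n) = m + n + f by ring] at this
        exact this
      show m ∈ shiftN C n
      exact hFC (mem_BF.2 ⟨h1, h2⟩)
  · exact ⟨∅, by simp, by intro m hm; exact hBA (mem_BF.1 hm).1⟩

/-- (3) ⇒ (2) -/
lemma three_imp_two {A : Set ℕ+} {𝓕 : Set (Set ℕ+)}
    (hfil : IsFilterFamily 𝓕) (hsyn : SyndeticFamily 𝓕) (hide : IdempotentFamily 𝓕)
    (hA : A ∈ 𝓕) :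
    ∃ B : Set ℕ+, B ⊆ A ∧
      ∀ F : Finset ℕ+, (F : Set ℕ+) ⊆ B → Syndetic (B ∩ ⋂ f ∈ F, shiftN B f) := by
  classical
  set B := A ∩ famShift A 𝓕 with hBdef
  have hBmem : B ∈ 𝓕 := hfil.2 hA (hide hA)
  have hshift : ∀ n ∈ B, shiftN B n ∈ 𝓕 := by
    intro n hn
    have hAn : shiftN A n ∈ 𝓕 := hn.2
    have h2 : famShift (shiftN A n) 𝓕 ∈ 𝓕 := hide hAn
    have : shiftN B n = shiftN A n ∩ famShift (shiftN A n) 𝓕 := by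
      ext m
      simp only [shiftN, Set.mem_setOf_eq, hBdef, Set.mem_inter_iff, famShift]
      constructor
      · rintro ⟨h1, h2⟩
        refine ⟨h1, ?_⟩
        convert h2 using 2
        ext l; simp [shiftN, add_assoc, add_comm, add_left_comm]
      · rintro ⟨h1, h2⟩
        refine ⟨h1, ?_⟩
        convert h2 using 2
        ext l; simp [shiftN, add_assoc, add_comm, add_left_comm]
    rw [this]
    exact hfil.2 hAn h2
  have hBF : ∀ F : Finset ℕ+, (F : Set ℕ+) ⊆ B → BF B F ∈ 𝓕 := by
    intro F
    induction F using Finset.induction with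
    | empty => intro _; simpa [BF] using hBmem
    | @insert a s ha ih =>
      intro hF
      have h1 : BF B (insert a s) = shiftN B a ∩ BF B s := by
        ext m
        simp only [mem_BF, Set.mem_inter_iff, Finset.mem_insert, shiftN, Set.mem_setOf_eq]
        constructor
        · rintro ⟨h1, h2⟩
          exact ⟨h2 a (Or.inl rfl), h1, fun f hf => h2 f (Or.inr hf)⟩
        · rintro ⟨h1, h2, h3⟩
          exact ⟨h2, fun f hf => hf.elim (fun e => e ▸ h1) (h3 f)⟩
      rw [h1]
      refine hfil.2 (hshift a (hF (by simp))) (ih (fun f hf => hF (by simp [hf])))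
  refine ⟨B, Set.inter_subset_left, ?_⟩
  intro F hF
  exact hsyn _ (hBF F hF)

lemma minsys_cover (S : MinSystem) (V : Set S.X) (hV : IsOpen V) (hne : V.Nonempty) :
    ∃ N : ℕ+, ∀ y : S.X, ∃ n : ℕ+, n ≤ N ∧ S.T^[(n : ℕ)] y ∈ V := by
  have hcov : (Set.univ : Set S.X) ⊆ ⋃ n : ℕ+, (fun y => S.T^[(n : ℕ)] y) ⁻¹' V := by
    intro y _
    have hd := S.minimal y
    obtain ⟨z, hz, n, rfl⟩ : ∃ z ∈ V, ∃ n : ℕ+, S.T^[(n : ℕ)] y = z := by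
      obtain ⟨z, hz⟩ := hd.exists_mem_open hV hne
      exact ⟨z, hz.2, by rcases hz.1 with ⟨n, rfl⟩; exact ⟨n, rfl⟩⟩
    exact Set.mem_iUnion.2 ⟨n, hz⟩
  have hcont : ∀ n : ℕ+, IsOpen ((fun y => S.T^[(n : ℕ)] y) ⁻¹' V) := by
    intro n; exact (S.cont.iterate _).isOpen_preimage _ hV
  obtain ⟨t, ht⟩ := IsCompact.elim_finite_subcover isCompact_univ _ hcont hcov
  refine ⟨t.sup id ⊔ 1, fun y => ?_⟩
  obtain ⟨n, hn, hny⟩ : ∃ n ∈ t, y ∈ (fun y => S.T^[(n : ℕ)] y) ⁻¹' V := by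
    have := ht (Set.mem_univ y)
    simpa using this
  exact ⟨n, le_trans (Finset.le_sup (f := id) hn) le_sup_left, hny⟩

lemma one_imp_two {A : Set ℕ+} (h : DynCentralSyndetic A) :
    ∃ B : Set ℕ+, B ⊆ A ∧
      ∀ F : Finset ℕ+, (F : Set ℕ+) ⊆ B → Syndetic (B ∩ ⋂ f ∈ F, shiftN B f) := by
  obtain ⟨S, x, U, hU, hxU, hRA⟩ := h
  refine ⟨retTimes S.T x U, hRA, ?_⟩
  intro F hF
  set B := retTimes S.T x U with hB
  set V : Set S.X := U ∩ ⋂ f ∈ F, (fun y => S.T^[(f : ℕ)] y) ⁻¹' U with hV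
  have hVopen : IsOpen V := by
    refine hU.inter ?_
    refine isOpen_biInter_finset (fun f _ => ?_)
    exact (S.cont.iterate _).isOpen_preimage _ hU
  have hxV : x ∈ V := by
    refine ⟨hxU, ?_⟩
    refine Set.mem_iInter₂.2 (fun f hf => ?_)
    exact hF hf
  obtain ⟨N, hN⟩ := minsys_cover S V hVopen ⟨x, hxV⟩
  -- retTimes x V ⊆ B ∩ ⋂ ...
  have hsub : retTimes S.T x V ⊆ B ∩ ⋂ f ∈ F, shiftN B f := by
    intro n hn
    have hn1 : S.T^[(n : ℕ)] x ∈ U := hn.1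
    refine ⟨hn1, Set.mem_iInter₂.2 (fun f hf => ?_)⟩
    have := (Set.mem_iInter₂.1 hn.2) f hf
    show (n + f : ℕ+) ∈ B
    show S.T^[((n + f : ℕ+) : ℕ)] x ∈ U
    have : S.T^[(f : ℕ)] (S.T^[(n : ℕ)] x) ∈ U := this
    rwa [← Function.iterate_add_apply, show ((f : ℕ) + (n : ℕ)) = ((n + f : ℕ+) : ℕ) by push_cast; ring] at this
  -- retTimes x V is syndetic
  have hsyn : Syndetic (retTimes S.T x V) := by
    refine ⟨N, Set.eq_univ_of_forall (fun m => ?_)⟩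
    obtain ⟨n, hnN, hny⟩ := hN (S.T^[(m : ℕ)] x)
    right
    refine Set.mem_iUnion₂.2 ⟨n, hnN, ?_⟩
    show (m + n : ℕ+) ∈ retTimes S.T x V
    show S.T^[((m + n : ℕ+) : ℕ)] x ∈ V
    rwa [show ((m + n : ℕ+) : ℕ) = (n : ℕ) + (m : ℕ) by push_cast; ring, Function.iterate_add_apply]
  -- conclude by monotonicity
  obtain ⟨N', hN'⟩ := hsyn
  refine ⟨N', Set.eq_univ_of_univ_subset ?_⟩
  rw [← hN']
  apply Set.union_subset_union hsub
  exact Set.iUnion₂_mono (fun k hk => fun m hm => hsub hm)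

noncomputable section
namespace DCS
variable (B' : Set ℕ)

/-- positions where a copy of the prefix of `x` of length `L` may be placed. -/
def Sset (x : ℕ → Bool) (L : ℕ) : Set ℕ :=
  {p | 1 ≤ p ∧ ∀ i, i < L → x i = true → p + i ∈ B'}

/-- least admissible position `≥ a`. -/
def nextp (x : ℕ → Bool) (L a : ℕ) : ℕ := sInf {p | p ∈ Sset B' x L ∧ a ≤ p}

lemma nextp_mem {x : ℕ → Bool} {L a : ℕ} (h : {p | p ∈ Sset B' x L ∧ a ≤ p}.Nonempty) :
    nextp B' x L a ∈ Sset B' x L ∧ a ≤ nextp B' x L a :=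
  Nat.sInf_mem h

lemma nextp_le {x : ℕ → Bool} {L a q : ℕ} (hq : q ∈ Sset B' x L) (haq : a ≤ q) :
    nextp B' x L a ≤ q := Nat.sInf_le ⟨hq, haq⟩

lemma nextp_ge {x : ℕ → Bool} {L a : ℕ} (ha : 1 ≤ a) (h : a ≤ nextp B' x L a) :
    nextp B' x L a ∈ Sset B' x L ∧ a ≤ nextp B' x L a := by
  rcases Set.eq_empty_or_nonempty {p | p ∈ Sset B' x L ∧ a ≤ p} with he | hne
  · exfalso
    have : nextp B' x L a = 0 := by
      simp [nextp, he]
    omega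
  · exact nextp_mem B' hne

/-- The recursive multi-level greedy fill. -/
def fill (x : ℕ → Bool) (lens : ℕ → ℕ) (k a b n : ℕ) : Bool :=
  if hk : k = 0 then false
  else
    if h : 1 ≤ a ∧ a ≤ nextp B' x (lens k) a ∧ 1 ≤ lens k ∧ nextp B' x (lens k) a + lens k ≤ b then
      if n < a then false
      else if n < nextp B' x (lens k) a then fill x lens (k-1) a (nextp B' x (lens k) a) n
      else if n < nextp B' x (lens k) a + lens k then x (n - nextp B' x (lens k) a)
      else if n < b then fill x lens k (nextp B' x (lens k) a + lens k) b n
      else false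
    else fill x lens (k-1) a b n
termination_by (k, b - a)
decreasing_by
  · exact Prod.Lex.left _ _ (by omega)
  · exact Prod.Lex.right _ (by omega)
  · exact Prod.Lex.left _ _ (by omega)

/-- the stages of the construction: `(lengths, content)`. -/
def stage : ℕ → ((ℕ → ℕ) × (ℕ → Bool))
  | 0 => (fun _ => 1, fun n => decide (n = 0))
  | (J+1) =>
    let s := stage J
    let Λ := s.1 J
    let p := nextp B' s.2 Λ Λ
    ( fun m => if m ≤ J then s.1 m else p + Λ,
      fun n => if n < Λ then s.2 n
               else if n < p then fill B' s.2 s.1 J Λ p n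
               else if n < p + Λ then s.2 (n - p)
               else false )

section PureLemmas

variable {B'}

lemma fill_eq_else {x : ℕ → Bool} {lens : ℕ → ℕ} {k a b : ℕ} (hk : k ≠ 0)
    (hg : ¬(1 ≤ a ∧ a ≤ nextp B' x (lens k) a ∧ 1 ≤ lens k ∧ nextp B' x (lens k) a + lens k ≤ b))
    (n : ℕ) : fill B' x lens k a b n = fill B' x lens (k-1) a b n := by
  rw [fill]; simp [hk, hg]

lemma fill_eq_left {x : ℕ → Bool} {lens : ℕ → ℕ} {k a b : ℕ} (hk : k ≠ 0)
    (hg : 1 ≤ a ∧ a ≤ nextp B' x (lens k) a ∧ 1 ≤ lens k ∧ nextp B' x (lens k) a + lens k ≤ b)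
    {n : ℕ} (h1 : a ≤ n) (h2 : n < nextp B' x (lens k) a) :
    fill B' x lens k a b n = fill B' x lens (k-1) a (nextp B' x (lens k) a) n := by
  rw [fill]; simp only [hk, dif_neg, dite_true, dif_pos hg]
  rw [if_neg (by omega), if_pos h2]
  simp

lemma fill_eq_copy {x : ℕ → Bool} {lens : ℕ → ℕ} {k a b : ℕ} (hk : k ≠ 0)
    (hg : 1 ≤ a ∧ a ≤ nextp B' x (lens k) a ∧ 1 ≤ lens k ∧ nextp B' x (lens k) a + lens k ≤ b)
    {n : ℕ} (h1 : nextp B' x (lens k) a ≤ n) (h2 : n < nextp B' x (lens k) a + lens k) :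
    fill B' x lens k a b n = x (n - nextp B' x (lens k) a) := by
  rw [fill]; simp only [hk, dif_neg, dite_true, dif_pos hg]
  rw [if_neg (by omega), if_neg (by omega), if_pos h2]
  simp

lemma fill_eq_right {x : ℕ → Bool} {lens : ℕ → ℕ} {k a b : ℕ} (hk : k ≠ 0)
    (hg : 1 ≤ a ∧ a ≤ nextp B' x (lens k) a ∧ 1 ≤ lens k ∧ nextp B' x (lens k) a + lens k ≤ b)
    {n : ℕ} (h1 : nextp B' x (lens k) a + lens k ≤ n) (h2 : n < b) :
    fill B' x lens k a b n = fill B' x lens k (nextp B' x (lens k) a + lens k) b n := by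
  rw [fill]; simp only [hk, dif_neg, dite_true, dif_pos hg]
  rw [if_neg (by omega), if_neg (by omega), if_neg (by omega), if_pos h2]
  simp

lemma fill_supp {x : ℕ → Bool} {lens : ℕ → ℕ} :
    ∀ k a b n, fill B' x lens k a b n = true → n ∈ B' := by
  intro k a b n
  induction k, a, b using fill.induct B' x lens n with
  | case1 a b => intro h; rw [fill] at h; simp at h
  | case2 k a b hk hg hn =>
    intro h; rw [fill] at h; simp only [hk, dif_neg, dite_true, dif_pos hg, if_pos hn] at h
    exact absurd h (by simp)
  | case3 k a b hk hg h1 h2 ih =>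
    intro h; rw [fill_eq_left hk hg (by omega) h2] at h; exact ih h
  | case4 k a b hk hg h1 h2 h3 =>
    intro h
    rw [fill_eq_copy hk hg (by omega) h3] at h
    have hp := (nextp_ge B' (by exact hg.1) hg.2.1).1
    have := hp.2 (n - nextp B' x (lens k) a) (by omega) h
    have hn : nextp B' x (lens k) a + (n - nextp B' x (lens k) a) = n := by omega
    rwa [hn] at this
  | case5 k a b hk hg h1 h2 h3 h4 ih =>
    intro h; rw [fill_eq_right hk hg (by omega) h4] at h; exact ih h
  | case6 k a b hk hg h1 h2 h3 h4 =>
    intro h; rw [fill] at h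
    simp only [hk, dif_neg, dite_true, dif_pos hg] at h
    rw [if_neg h1, if_neg h2, if_neg h3, if_neg h4] at h
    exact absurd h (by simp)
  | case7 k a b hk hg ih =>
    intro h; rw [fill_eq_else hk hg] at h; exact ih h

end PureLemmas

/-- stage lengths -/
def Lv (J : ℕ) : ℕ := (stage B' J).1 J

/-- the limit point -/
def xinf (n : ℕ) : Bool := (stage B' (n+1)).2 n

section StageLemmas

variable {B'}

/-- abbreviations -/
def xsf (J : ℕ) : ℕ → Bool := (stage B' J).2
def pstar (J : ℕ) : ℕ := nextp B' (xsf (B' := B') J) (Lv B' J) (Lv B' J)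

lemma stage_succ_len (J m : ℕ) :
    (stage B' (J+1)).1 m = if m ≤ J then (stage B' J).1 m else pstar (B' := B') J + Lv B' J := by
  rfl

lemma Lv_succ (J : ℕ) : Lv B' (J+1) = pstar (B' := B') J + Lv B' J := by
  show (stage B' (J+1)).1 (J+1) = _
  rw [stage_succ_len, if_neg (by omega)]

lemma lens_stable {m J : ℕ} (h : m ≤ J) : (stage B' J).1 m = Lv B' m := by
  induction J with
  | zero => have : m = 0 := by omega
            subst this; rfl
  | succ J ih =>
    rcases Nat.lt_or_ge m (J+1) with hm | hm
    · rw [stage_succ_len, if_pos (by omega)]; exact ih (by omega)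
    · have : m = J + 1 := by omega
      subst this; rfl

lemma xsf_succ (J n : ℕ) :
    xsf (B' := B') (J+1) n =
      if n < Lv B' J then xsf (B' := B') J n
      else if n < pstar (B' := B') J then
        fill B' (xsf (B' := B') J) ((stage B' J).1) J (Lv B' J) (pstar (B' := B') J) n
      else if n < pstar (B' := B') J + Lv B' J then xsf (B' := B') J (n - pstar (B' := B') J)
      else false := by
  rfl

lemma Lv_zero : Lv B' 0 = 1 := rfl

lemma xsf_zero_apply (n : ℕ) : xsf (B' := B') 0 n = decide (n = 0) := rfl

lemma Lv_le_succ (J : ℕ) : Lv B' J ≤ Lv B' (J+1) := by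
  rw [Lv_succ]; omega

lemma Lv_mono {J J' : ℕ} (h : J ≤ J') : Lv B' J ≤ Lv B' J' := by
  induction J' with
  | zero => have : J = 0 := by omega
            subst this; rfl
  | succ J' ih =>
    rcases Nat.lt_or_ge J (J'+1) with hm | hm
    · exact le_trans (ih (by omega)) (Lv_le_succ J')
    · have : J = J' + 1 := by omega
      subst this; rfl

lemma xsf_agree_succ {J n : ℕ} (h : n < Lv B' J) :
    xsf (B' := B') (J+1) n = xsf (B' := B') J n := by
  rw [xsf_succ, if_pos h]

lemma xsf_agree {J J' n : ℕ} (hJ : J ≤ J') (h : n < Lv B' J) :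
    xsf (B' := B') J' n = xsf (B' := B') J n := by
  induction J' with
  | zero => have : J = 0 := by omega
            subst this; rfl
  | succ J' ih =>
    rcases Nat.lt_or_ge J (J'+1) with hm | hm
    · rw [xsf_agree_succ (lt_of_lt_of_le h (Lv_mono (by omega)))]
      exact ih (by omega)
    · have : J = J' + 1 := by omega
      subst this; rfl

/-- basic stage invariants, hypothesis-free -/
lemma stage_basic (J : ℕ) :
    xsf (B' := B') J 0 = true ∧ (∀ n, xsf (B' := B') J n = true → n = 0 ∨ n ∈ B') ∧ 1 ≤ Lv B' J := by
  induction J with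
  | zero =>
    refine ⟨rfl, fun n hn => ?_, le_refl 1⟩
    left
    simpa [xsf_zero_apply] using hn
  | succ J ih =>
    obtain ⟨h0, hsupp, hL⟩ := ih
    have hps : pstar (B' := B') J = 0 ∨
        (pstar (B' := B') J ∈ Sset B' (xsf (B' := B') J) (Lv B' J) ∧ Lv B' J ≤ pstar (B' := B') J) := by
      rcases Set.eq_empty_or_nonempty
        {p | p ∈ Sset B' (xsf (B' := B') J) (Lv B' J) ∧ Lv B' J ≤ p} with he | hne
      · left; simp [pstar, nextp, he]
      · right; exact nextp_mem B' hne
    refine ⟨?_, ?_, ?_⟩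
    · rw [xsf_succ, if_pos (by omega)]; exact h0
    · intro n hn
      rw [xsf_succ] at hn
      by_cases h1 : n < Lv B' J
      · rw [if_pos h1] at hn; exact hsupp n hn
      · rw [if_neg h1] at hn
        by_cases h2 : n < pstar (B' := B') J
        · rw [if_pos h2] at hn
          exact Or.inr (fill_supp _ _ _ _ hn)
        · rw [if_neg h2] at hn
          by_cases h3 : n < pstar (B' := B') J + Lv B' J
          · rw [if_pos h3] at hn
            rcases hps with hz | ⟨hmem, hge⟩
            · omega
            · rcases hsupp _ hn with hc | hc
              · right
                have := hmem.2 0 (by omega) h0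
                have hn0 : n = pstar (B' := B') J := by omega
                rw [hn0]; simpa using this
              · right
                have := hmem.2 (n - pstar (B' := B') J) (by omega) hn
                have hh : pstar (B' := B') J + (n - pstar (B' := B') J) = n := by omega
                rwa [hh] at this
          · rw [if_neg h3] at hn; exact absurd hn (by simp)
    · rw [Lv_succ]; omega

end StageLemmas

section WithHyp

variable {B' : Set ℕ}
variable (hyp : ∀ x : ℕ → Bool, x 0 = true → (∀ i, x i = true → i = 0 ∨ i ∈ B') →
    ∀ L, 1 ≤ L → ∃ g, 1 ≤ g ∧ ∀ a, ∃ q, q ∈ Sset B' x L ∧ a ≤ q ∧ q ≤ a + g)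

include hyp

lemma pstar_spec (J : ℕ) :
    pstar (B' := B') J ∈ Sset B' (xsf (B' := B') J) (Lv B' J) ∧ Lv B' J ≤ pstar (B' := B') J := by
  obtain ⟨h0, hsupp, hL⟩ := stage_basic (B' := B') J
  obtain ⟨g, hg1, hg2⟩ := hyp (xsf (B' := B') J) h0 hsupp (Lv B' J) hL
  obtain ⟨q, hq1, hq2, hq3⟩ := hg2 (Lv B' J)
  exact nextp_mem B' ⟨q, hq1, hq2⟩

lemma Lv_ge (J : ℕ) : J + 1 ≤ Lv B' J := by
  induction J with
  | zero => simp [Lv_zero]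
  | succ J ih =>
    have h1 := (pstar_spec hyp J).2
    have h2 := (stage_basic (B' := B') J).2.2
    rw [Lv_succ]; omega

lemma xinf_eq {J n : ℕ} (h : n < Lv B' J) : xinf B' n = xsf (B' := B') J n := by
  show xsf (B' := B') (n+1) n = xsf (B' := B') J n
  have h1 : n < Lv B' (n+1) := by have := Lv_ge hyp (n+1); omega
  rcases Nat.le_total J (n+1) with hc | hc
  · rw [xsf_agree hc h]
  · rw [xsf_agree (J' := J) hc h1]

lemma xinf_zero : xinf B' 0 = true := by
  rw [xinf_eq hyp (J := 0) (by rw [Lv_zero]; omega)]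
  exact (stage_basic 0).1

lemma xinf_supp : ∀ n, xinf B' n = true → n = 0 ∨ n ∈ B' := by
  intro n hn
  rw [xinf_eq hyp (J := n+1) (by have := Lv_ge hyp (n+1); omega)] at hn
  exact (stage_basic (n+1)).2.1 n hn

lemma Sset_xinf {m J : ℕ} (h : m ≤ J) :
    Sset B' (xsf (B' := B') J) (Lv B' m) = Sset B' (xinf B') (Lv B' m) := by
  have key : ∀ i < Lv B' m, xsf (B' := B') J i = xinf B' i := by
    intro i hi
    exact (xinf_eq hyp (lt_of_lt_of_le hi (Lv_mono h))).symm
  ext p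
  simp only [Sset, Set.mem_setOf_eq]
  constructor
  · rintro ⟨h1, h2⟩
    exact ⟨h1, fun i hi hx => h2 i hi (by rw [key i hi]; exact hx)⟩
  · rintro ⟨h1, h2⟩
    exact ⟨h1, fun i hi hx => h2 i hi (by rw [← key i hi]; exact hx)⟩

lemma topcopy (J : ℕ) : ∀ t, t < Lv B' J → xinf B' (pstar (B' := B') J + t) = xinf B' t := by
  intro t ht
  have hps := (pstar_spec hyp J).2
  have h1 : pstar (B' := B') J + t < Lv B' (J+1) := by rw [Lv_succ]; omega
  rw [xinf_eq hyp h1, xsf_succ, if_neg (by omega), if_neg (by omega), if_pos (by omega)]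
  rw [show pstar (B' := B') J + t - pstar (B' := B') J = t by omega]
  exact (xinf_eq hyp ht).symm

/-- occurrences of the prefix of length `ℓ` -/
def OccP (B'' : Set ℕ) (ℓ n : ℕ) : Prop := ∀ i, i < ℓ → xinf B'' (n + i) = xinf B'' i

lemma suffix_occ {j m : ℕ} (h : j ≤ m) :
    ∀ i, i < Lv B' j → xinf B' (Lv B' m - Lv B' j + i) = xinf B' i := by
  induction m, h using Nat.le_induction with
  | base => intro i hi; rw [show Lv B' j - Lv B' j + i = i by omega]
  | succ m hm ih =>
    intro i hi
    have hmono : Lv B' j ≤ Lv B' m := Lv_mono hm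
    have h1 : Lv B' (m+1) - Lv B' j + i = pstar (B' := B') m + (Lv B' m - Lv B' j + i) := by
      rw [Lv_succ]; omega
    rw [h1, topcopy hyp m _ (by omega), ih i hi]

/-- a region `[a,b)` of `xinf` that is realized as a fill at stage `J`, level `k`. -/
def RealP (B'' : Set ℕ) (J k a b : ℕ) : Prop :=
  1 ≤ a ∧ ∀ n, a ≤ n → n < b →
    xinf B'' n = fill B'' (xsf (B' := B'') J) ((stage B'' J).1) k a b n

lemma real_top (J : ℕ) : RealP B' J J (Lv B' J) (pstar (B' := B') J) := by
  refine ⟨(stage_basic (B' := B') J).2.2, fun n hn1 hn2 => ?_⟩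
  have hps := (pstar_spec hyp J).2
  have h1 : n < Lv B' (J+1) := by rw [Lv_succ]; omega
  rw [xinf_eq hyp h1, xsf_succ, if_neg (by omega), if_pos hn2]

omit hyp in
lemma real_else {J k a b : ℕ} (hR : RealP B' J k a b) (hk : k ≠ 0)
    (hng : ¬(1 ≤ a ∧ a ≤ nextp B' (xsf (B' := B') J) ((stage B' J).1 k) a ∧
      1 ≤ (stage B' J).1 k ∧
      nextp B' (xsf (B' := B') J) ((stage B' J).1 k) a + (stage B' J).1 k ≤ b)) :
    RealP B' J (k-1) a b := by
  refine ⟨hR.1, fun n hn1 hn2 => ?_⟩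
  rw [hR.2 n hn1 hn2, fill_eq_else hk hng]

omit hyp in
lemma real_left {J k a b : ℕ} (hR : RealP B' J k a b) (hk : k ≠ 0)
    (hg : 1 ≤ a ∧ a ≤ nextp B' (xsf (B' := B') J) ((stage B' J).1 k) a ∧
      1 ≤ (stage B' J).1 k ∧
      nextp B' (xsf (B' := B') J) ((stage B' J).1 k) a + (stage B' J).1 k ≤ b) :
    RealP B' J (k-1) a (nextp B' (xsf (B' := B') J) ((stage B' J).1 k) a) := by
  refine ⟨hR.1, fun n hn1 hn2 => ?_⟩
  rw [hR.2 n hn1 (by omega), fill_eq_left hk hg hn1 hn2]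

omit hyp in
lemma real_right {J k a b : ℕ} (hR : RealP B' J k a b) (hk : k ≠ 0)
    (hg : 1 ≤ a ∧ a ≤ nextp B' (xsf (B' := B') J) ((stage B' J).1 k) a ∧
      1 ≤ (stage B' J).1 k ∧
      nextp B' (xsf (B' := B') J) ((stage B' J).1 k) a + (stage B' J).1 k ≤ b) :
    RealP B' J k (nextp B' (xsf (B' := B') J) ((stage B' J).1 k) a + (stage B' J).1 k) b := by
  refine ⟨by omega, fun n hn1 hn2 => ?_⟩
  rw [hR.2 n (by omega) hn2, fill_eq_right hk hg hn1 hn2]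

lemma real_copy {J k a b : ℕ} (hR : RealP B' J k a b) (hk : k ≠ 0) (hkJ : k ≤ J)
    (hg : 1 ≤ a ∧ a ≤ nextp B' (xsf (B' := B') J) ((stage B' J).1 k) a ∧
      1 ≤ (stage B' J).1 k ∧
      nextp B' (xsf (B' := B') J) ((stage B' J).1 k) a + (stage B' J).1 k ≤ b) :
    ∀ t, t < (stage B' J).1 k →
      xinf B' (nextp B' (xsf (B' := B') J) ((stage B' J).1 k) a + t) = xinf B' t := by
  intro t ht
  set p := nextp B' (xsf (B' := B') J) ((stage B' J).1 k) a with hp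
  have h1 : xinf B' (p + t) = fill B' (xsf (B' := B') J) ((stage B' J).1) k a b (p + t) :=
    hR.2 (p + t) (by omega) (by omega)
  rw [h1, fill_eq_copy hk hg (by omega) (by omega),
    show p + t - p = t by omega]
  have ht' : t < Lv B' k := by rwa [lens_stable hkJ] at ht
  exact (xinf_eq hyp (lt_of_lt_of_le ht' (Lv_mono hkJ))).symm

/-- syndeticity bound for the admissible-position sets of `xinf`. -/
def gbnd (j : ℕ) : ℕ :=
  (hyp (xinf B') (xinf_zero hyp) (xinf_supp hyp) (Lv B' j) (stage_basic j).2.2).choose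

lemma gbnd_spec (j : ℕ) : 1 ≤ gbnd hyp j ∧
    ∀ a, ∃ q, q ∈ Sset B' (xinf B') (Lv B' j) ∧ a ≤ q ∧ q ≤ a + gbnd hyp j :=
  (hyp (xinf B') (xinf_zero hyp) (xinf_supp hyp) (Lv B' j) (stage_basic j).2.2).choose_spec

lemma guard_at_j {J j a b : ℕ} (hjJ : j ≤ J) (ha : 1 ≤ a)
    (hb : a + (gbnd hyp j + Lv B' j) ≤ b) :
    (1 ≤ a ∧ a ≤ nextp B' (xsf (B' := B') J) ((stage B' J).1 j) a ∧
      1 ≤ (stage B' J).1 j ∧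
      nextp B' (xsf (B' := B') J) ((stage B' J).1 j) a + (stage B' J).1 j ≤ b) ∧
    nextp B' (xsf (B' := B') J) ((stage B' J).1 j) a ≤ a + gbnd hyp j := by
  rw [lens_stable hjJ]
  obtain ⟨q, hq1, hq2, hq3⟩ := (gbnd_spec hyp j).2 a
  rw [← Sset_xinf hyp hjJ] at hq1
  have hne : {p | p ∈ Sset B' (xsf (B' := B') J) (Lv B' j) ∧ a ≤ p}.Nonempty := ⟨q, hq1, hq2⟩
  obtain ⟨hpS, hpa⟩ := nextp_mem B' hne
  have hple : nextp B' (xsf (B' := B') J) (Lv B' j) a ≤ q := nextp_le B' hq1 hq2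
  exact ⟨⟨ha, hpa, (stage_basic j).2.2, by omega⟩, by omega⟩

lemma head_start {j J : ℕ} (hj : 1 ≤ j) : ∀ k, j ≤ k → k ≤ J → ∀ a b, RealP B' J k a b →
    a + (gbnd hyp j + Lv B' j) ≤ b →
    ∃ n, a ≤ n ∧ n ≤ a + (gbnd hyp j + Lv B' j) ∧ n + Lv B' j ≤ b ∧ OccP B' (Lv B' j) n := by
  intro k
  induction k using Nat.strong_induction_on with
  | _ k ih =>
    intro hjk hkJ a b hR hb
    have hk0 : k ≠ 0 := by omega
    have hLk : (stage B' J).1 k = Lv B' k := lens_stable hkJ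
    have hlk : Lv B' j ≤ Lv B' k := Lv_mono hjk
    by_cases hkj : k = j
    · subst hkj
      obtain ⟨hgd, hple⟩ := guard_at_j hyp hkJ hR.1 hb
      refine ⟨nextp B' (xsf (B' := B') J) ((stage B' J).1 k) a, hgd.2.1, by omega, by
        have := hgd.2.2.2; rw [hLk] at this ⊢; omega, fun i hi => ?_⟩
      exact real_copy hyp hR hk0 hkJ hgd i (by omega)
    · by_cases hgd : (1 ≤ a ∧ a ≤ nextp B' (xsf (B' := B') J) ((stage B' J).1 k) a ∧
          1 ≤ (stage B' J).1 k ∧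
          nextp B' (xsf (B' := B') J) ((stage B' J).1 k) a + (stage B' J).1 k ≤ b)
      · by_cases hsplit : a + (gbnd hyp j + Lv B' j) ≤
            nextp B' (xsf (B' := B') J) ((stage B' J).1 k) a
        · obtain ⟨n, h1, h2, h3, h4⟩ := ih (k-1) (by omega) (by omega) (by omega) a _
            (real_left hR hk0 hgd) hsplit
          exact ⟨n, h1, h2, by have := hgd.2.2.2; omega, h4⟩
        · refine ⟨nextp B' (xsf (B' := B') J) ((stage B' J).1 k) a, hgd.2.1, by omega, by
            have := hgd.2.2.2; rw [hLk] at this; omega, fun i hi => ?_⟩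
          exact real_copy hyp hR hk0 hkJ hgd i (by rw [hLk]; omega)
      · exact ih (k-1) (by omega) (by omega) (by omega) a b (real_else hR hk0 hgd) hb

lemma tail_occ {j J : ℕ} (hj : 1 ≤ j) : ∀ M, ∀ k a b, k + (b - a) ≤ M → j ≤ k → k ≤ J →
    RealP B' J k a b → a + (gbnd hyp j + Lv B' j) ≤ b →
    ∃ n, a ≤ n ∧ n + Lv B' j ≤ b ∧ b ≤ n + (gbnd hyp j + Lv B' j) + Lv B' j ∧
      OccP B' (Lv B' j) n := by
  intro M
  induction M with
  | zero => intro k a b hM hjk; omega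
  | succ M ih =>
    intro k a b hM hjk hkJ hR hb
    have hk0 : k ≠ 0 := by omega
    have hLk : (stage B' J).1 k = Lv B' k := lens_stable hkJ
    have hlk : Lv B' j ≤ Lv B' k := Lv_mono hjk
    by_cases hgd : (1 ≤ a ∧ a ≤ nextp B' (xsf (B' := B') J) ((stage B' J).1 k) a ∧
        1 ≤ (stage B' J).1 k ∧
        nextp B' (xsf (B' := B') J) ((stage B' J).1 k) a + (stage B' J).1 k ≤ b)
    · set p := nextp B' (xsf (B' := B') J) ((stage B' J).1 k) a with hp
      by_cases hsplit : p + (stage B' J).1 k + (gbnd hyp j + Lv B' j) ≤ b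
      · refine ih k (p + (stage B' J).1 k) b ?_ hjk hkJ (real_right hR hk0 hgd) hsplit |>.imp
          (fun n hn => ⟨by have := hgd.2.1; have := hgd.2.2.1; omega, hn.2.1, hn.2.2.1, hn.2.2.2⟩)
        have h1 := hgd.2.1
        have h2 := hgd.2.2.1
        omega
      · refine ⟨p + (stage B' J).1 k - Lv B' j, by have := hgd.2.1; rw [hLk]; omega, by
          have := hgd.2.2.2; rw [hLk]; omega, by rw [hLk]; omega, fun i hi => ?_⟩
        have h1 : p + (stage B' J).1 k - Lv B' j + i = p + ((stage B' J).1 k - Lv B' j + i) := by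
          rw [hLk]; omega
        rw [h1, real_copy hyp hR hk0 hkJ hgd _ (by rw [hLk] at *; omega), hLk]
        exact suffix_occ hyp hjk i hi
    · by_cases hkj : k = j
      · exfalso
        subst hkj
        exact hgd (guard_at_j hyp hkJ hR.1 hb).1
      · exact ih (k-1) a b (by omega) (by omega) (by omega) (real_else hR hk0 hgd) hb

lemma gap_occ {j J : ℕ} (hj : 1 ≤ j)
    (hW : ∀ m, j ≤ m → m ≤ J → ∀ c, c + (2*gbnd hyp j + 3*Lv B' j + 1) ≤ Lv B' m →
      ∃ n, c ≤ n ∧ n + Lv B' j ≤ c + (2*gbnd hyp j + 3*Lv B' j + 1) ∧ OccP B' (Lv B' j) n) :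
    ∀ M, ∀ k a b, k + (b - a) ≤ M → j ≤ k → k ≤ J → RealP B' J k a b →
    ∀ c, a ≤ c → c + (2*gbnd hyp j + 3*Lv B' j + 1) ≤ b →
    ∃ n, c ≤ n ∧ n + Lv B' j ≤ c + (2*gbnd hyp j + 3*Lv B' j + 1) ∧ OccP B' (Lv B' j) n := by
  intro M
  induction M with
  | zero => intro k a b hM hjk; omega
  | succ M ih =>
    intro k a b hM hjk hkJ hR c hac hcb
    have hk0 : k ≠ 0 := by omega
    have hLk : (stage B' J).1 k = Lv B' k := lens_stable hkJ
    have hlk : Lv B' j ≤ Lv B' k := Lv_mono hjk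
    have hg1 : 1 ≤ gbnd hyp j := (gbnd_spec hyp j).1
    have hl1 : 1 ≤ Lv B' j := (stage_basic j).2.2
    by_cases hgd : (1 ≤ a ∧ a ≤ nextp B' (xsf (B' := B') J) ((stage B' J).1 k) a ∧
        1 ≤ (stage B' J).1 k ∧
        nextp B' (xsf (B' := B') J) ((stage B' J).1 k) a + (stage B' J).1 k ≤ b)
    · set p := nextp B' (xsf (B' := B') J) ((stage B' J).1 k) a with hpdef
      have hga := hgd.1
      have hgp := hgd.2.1
      have hgL := hgd.2.2.1
      have hgb := hgd.2.2.2
      by_cases hA : c + (2*gbnd hyp j + 3*Lv B' j + 1) ≤ p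
      · by_cases hkj : k = j
        · exfalso
          subst hkj
          have hple := (guard_at_j hyp hkJ hR.1 (a := a) (b := b) (by omega)).2
          omega
        · exact ih (k-1) a p (by omega) (by omega) (by omega) (real_left hR hk0 hgd) c hac hA
      · by_cases hB : p + (stage B' J).1 k ≤ c
        · exact ih k (p + (stage B' J).1 k) b (by omega) hjk hkJ (real_right hR hk0 hgd) c hB hcb
        · -- window meets the copy [p, p + L)
          by_cases hcp : c ≤ p
          · by_cases hpl : p + Lv B' j ≤ c + (2*gbnd hyp j + 3*Lv B' j + 1)
            · exact ⟨p, hcp, hpl, fun i hi =>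
                real_copy hyp hR hk0 hkJ hgd i (by rw [hLk]; omega)⟩
            · -- left piece tail
              have hkj : k ≠ j := by
                intro hkj
                subst hkj
                have hple := (guard_at_j hyp hkJ hR.1 (a := a) (b := b) (by omega)).2
                omega
              obtain ⟨n, hn1, hn2, hn3, hn4⟩ := tail_occ hyp hj ((k-1) + (p - a)) (k-1) a p
                (le_refl _) (by omega) (by omega) (real_left hR hk0 hgd) (by omega)
              exact ⟨n, by omega, by omega, hn4⟩
          · -- c inside the copy
            by_cases hfits : (c - p) + (2*gbnd hyp j + 3*Lv B' j + 1) ≤ (stage B' J).1 k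
            · obtain ⟨nb, hn1, hn2, hn3⟩ := hW k hjk hkJ (c - p) (by rw [hLk] at hfits; omega)
              refine ⟨p + nb, by omega, by omega, fun i hi => ?_⟩
              rw [show p + nb + i = p + (nb + i) by omega,
                real_copy hyp hR hk0 hkJ hgd _ (by omega), hn3 i hi]
            · by_cases hcn0 : c ≤ p + (stage B' J).1 k - Lv B' j
              · refine ⟨p + (stage B' J).1 k - Lv B' j, hcn0, by omega, fun i hi => ?_⟩
                rw [show p + (stage B' J).1 k - Lv B' j + i
                    = p + ((stage B' J).1 k - Lv B' j + i) by rw [hLk]; omega,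
                  real_copy hyp hR hk0 hkJ hgd _ (by rw [hLk] at *; omega), hLk]
                exact suffix_occ hyp hjk i hi
              · obtain ⟨n, hn1, hn2, hn3, hn4⟩ := head_start hyp hj k hjk hkJ
                  (p + (stage B' J).1 k) b (real_right hR hk0 hgd) (by rw [hLk] at *; omega)
                exact ⟨n, by omega, by rw [hLk] at *; omega, hn4⟩
    · by_cases hkj : k = j
      · exfalso
        subst hkj
        exact hgd (guard_at_j hyp hkJ hR.1 (a := a) (b := b) (by omega)).1
      · exact ih (k-1) a b (by omega) (by omega) (by omega) (real_else hR hk0 hgd) c hac hcb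

lemma Wlem {j : ℕ} (hj : 1 ≤ j) : ∀ J, ∀ c, c + (2*gbnd hyp j + 3*Lv B' j + 1) ≤ Lv B' J →
    ∃ n, c ≤ n ∧ n + Lv B' j ≤ c + (2*gbnd hyp j + 3*Lv B' j + 1) ∧ OccP B' (Lv B' j) n := by
  intro J
  induction J using Nat.strong_induction_on with
  | _ J ih =>
    intro c hc
    have hg1 : 1 ≤ gbnd hyp j := (gbnd_spec hyp j).1
    have hl1 : 1 ≤ Lv B' j := (stage_basic j).2.2
    by_cases hJj : J ≤ j
    · exfalso
      have := Lv_mono (B' := B') hJj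
      omega
    · obtain ⟨J', rfl, hjJ'⟩ : ∃ J'', J = J'' + 1 ∧ j ≤ J'' := ⟨J-1, by omega, by omega⟩
      have hLv : Lv B' (J'+1) = pstar (B' := B') J' + Lv B' J' := Lv_succ J'
      have hPge : Lv B' J' ≤ pstar (B' := B') J' := (pstar_spec hyp J').2
      have hlJ' : Lv B' j ≤ Lv B' J' := Lv_mono (by omega)
      rw [hLv] at hc
      by_cases hi : c + (2*gbnd hyp j + 3*Lv B' j + 1) ≤ Lv B' J'
      · exact ih J' (by omega) c hi
      · by_cases hii : pstar (B' := B') J' ≤ c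
        · obtain ⟨nb, hn1, hn2, hn3⟩ := ih J' (by omega) (c - pstar (B' := B') J') (by omega)
          refine ⟨pstar (B' := B') J' + nb, by omega, by omega, fun i hiℓ => ?_⟩
          rw [show pstar (B' := B') J' + nb + i = pstar (B' := B') J' + (nb + i) by omega,
            topcopy hyp J' _ (by omega), hn3 i hiℓ]
        · by_cases hiii : c < Lv B' J'
          · by_cases hstr : c + Lv B' j ≤ Lv B' J'
            · refine ⟨Lv B' J' - Lv B' j, by omega, by omega, fun i hiℓ => ?_⟩
              exact suffix_occ hyp (by omega) i hiℓ
            · by_cases hfill : Lv B' J' + (gbnd hyp j + Lv B' j) ≤ pstar (B' := B') J'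
              · obtain ⟨n, hn1, hn2, hn3, hn4⟩ := head_start hyp hj J' (by omega) (le_refl J')
                  (Lv B' J') (pstar (B' := B') J') (real_top hyp J') hfill
                exact ⟨n, by omega, by omega, hn4⟩
              · refine ⟨pstar (B' := B') J', by omega, by omega, fun i hiℓ => ?_⟩
                exact topcopy hyp J' i (by omega)
          · -- Lv B' J' ≤ c < pstar J'
            have hiv : Lv B' J' ≤ c := by omega
            have hcP : c < pstar (B' := B') J' := by omega
            by_cases hin : c + (2*gbnd hyp j + 3*Lv B' j + 1) ≤ pstar (B' := B') J'
            · exact gap_occ hyp hj (fun m hm1 hm2 c' hc' => ih m (by omega) c' hc')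
                (J' + (pstar (B' := B') J' - Lv B' J')) J' (Lv B' J') (pstar (B' := B') J')
                (le_refl _) (by omega) (le_refl J') (real_top hyp J') c hiv hin
            · by_cases hP : pstar (B' := B') J' + Lv B' j ≤ c + (2*gbnd hyp j + 3*Lv B' j + 1)
              · refine ⟨pstar (B' := B') J', by omega, hP, fun i hiℓ => ?_⟩
                exact topcopy hyp J' i (by omega)
              · obtain ⟨n, hn1, hn2, hn3, hn4⟩ := tail_occ hyp hj
                  (J' + (pstar (B' := B') J' - Lv B' J')) J' (Lv B' J') (pstar (B' := B') J')
                  (le_refl _) (by omega) (le_refl J') (real_top hyp J') (by omega)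
                exact ⟨n, by omega, by omega, hn4⟩

lemma global_occ {j : ℕ} (hj : 1 ≤ j) (c : ℕ) :
    ∃ n, c ≤ n ∧ n + Lv B' j ≤ c + (2*gbnd hyp j + 3*Lv B' j + 1) ∧ OccP B' (Lv B' j) n := by
  apply Wlem hyp hj (c + 2*gbnd hyp j + 3*Lv B' j + 1)
  have := Lv_ge hyp (c + 2*gbnd hyp j + 3*Lv B' j + 1)
  omega

end WithHyp

end DCS
end

noncomputable section Dyn

instance : MetricSpace (ℕ → Bool) := PiNat.metricSpace

/-- the one-sided shift. -/
def shiftT : (ℕ → Bool) → (ℕ → Bool) := fun z n => z (n + 1)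

lemma shiftT_cont : Continuous shiftT :=
  continuous_pi (fun n => continuous_apply (n + 1))

lemma shiftT_iter (m : ℕ) (z : ℕ → Bool) (n : ℕ) : (shiftT^[m] z) n = z (n + m) := by
  induction m generalizing z n with
  | zero => rfl
  | succ m ih =>
    rw [Function.iterate_succ_apply, ih]
    rfl

lemma cylinder_mem_nhds (x : ℕ → Bool) (U : Set (ℕ → Bool)) (hU : U ∈ nhds x) :
    ∃ k : ℕ, {z : ℕ → Bool | ∀ i ≤ k, z i = x i} ⊆ U := by
  obtain ⟨ε, hε, hb⟩ := Metric.mem_nhds_iff.1 hU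
  obtain ⟨n, hn⟩ : ∃ n : ℕ, (1/2 : ℝ)^n < ε := exists_pow_lt_of_lt_one hε (by norm_num)
  refine ⟨n, fun z hz => hb ?_⟩
  have h1 : dist z x ≤ (1/2:ℝ)^n := by
    apply PiNat.mem_cylinder_iff_dist_le.1
    rw [PiNat.mem_cylinder_iff]
    intro i hi
    exact hz i hi.le
  exact Metric.mem_ball.2 (lt_of_le_of_lt h1 hn)

theorem dyn_from_point (A : Set ℕ+) (x : ℕ → Bool) (hx0 : x 0 = true)
    (hsupp : ∀ n : ℕ, x n = true → n = 0 ∨ ∃ hp : 0 < n, (⟨n, hp⟩ : ℕ+) ∈ A)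
    (hrec : ∀ k, ∃ N, 1 ≤ N ∧ ∀ c, ∃ n, c < n ∧ n ≤ c + N ∧ ∀ i, i ≤ k → x (n + i) = x i) :
    DynCentralSyndetic A := by
  classical
  set R : Set (ℕ → Bool) := Set.range (fun m : ℕ => shiftT^[m] x) with hR
  set S : Set (ℕ → Bool) := closure R with hS
  have hxS : x ∈ S := subset_closure ⟨0, rfl⟩
  have hTR : ∀ z ∈ R, shiftT z ∈ R := by
    rintro z ⟨m, rfl⟩
    refine ⟨m + 1, ?_⟩
    show shiftT^[m+1] x = shiftT (shiftT^[m] x)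
    rw [Function.iterate_succ_apply']
  have hTS : ∀ z ∈ S, shiftT z ∈ S := by
    intro z hz
    have h1 : shiftT z ∈ shiftT '' S := ⟨z, hz, rfl⟩
    have h2 : shiftT '' S ⊆ closure (shiftT '' R) :=
      image_closure_subset_closure_image shiftT_cont
    refine closure_mono ?_ (h2 h1)
    rintro w ⟨z', hz', rfl⟩
    exact hTR z' hz'
  -- the key recurrence consequence on all of S
  have hkey : ∀ z ∈ S, ∀ k : ℕ, ∃ n : ℕ, 1 ≤ n ∧ ∀ i ≤ k, (shiftT^[n] z) i = x i := by
    intro z hz k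
    obtain ⟨N, hN1, hN2⟩ := hrec k
    set Q : Set (ℕ → Bool) :=
      ⋃ n ∈ Finset.Icc 1 N, ⋂ i ∈ Finset.range (k+1), {w : ℕ → Bool | w (n + i) = x i} with hQ
    have hQclosed : IsClosed Q := by
      apply Set.Finite.isClosed_biUnion (Finset.finite_toSet _)
      intro n _
      refine isClosed_iInter (fun i => isClosed_iInter (fun _ => ?_))
      have he : {w : ℕ → Bool | w (n + i) = x i}
          = (fun w : ℕ → Bool => w (n + i)) ⁻¹' {x i} := rfl
      rw [he]
      exact IsClosed.preimage (continuous_apply (n + i)) (isClosed_discrete {x i})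
    have hRQ : R ⊆ Q := by
      rintro w ⟨m, rfl⟩
      obtain ⟨n', hn'1, hn'2, hn'3⟩ := hN2 m
      refine Set.mem_iUnion₂.2 ⟨n' - m, Finset.mem_Icc.2 ⟨by omega, by omega⟩, ?_⟩
      refine Set.mem_iInter₂.2 (fun i hi => ?_)
      show (shiftT^[m] x) (n' - m + i) = x i
      rw [shiftT_iter, show n' - m + i + m = n' + i by omega]
      exact hn'3 i (by simpa using Nat.lt_succ_iff.1 (Finset.mem_range.1 hi))
    have hzQ : z ∈ Q := by
      have : S ⊆ Q := closure_minimal hRQ hQclosed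
      exact this hz
    obtain ⟨n, hn, hmatch⟩ := Set.mem_iUnion₂.1 hzQ
    refine ⟨n, (Finset.mem_Icc.1 hn).1, fun i hi => ?_⟩
    rw [shiftT_iter, show i + n = n + i by omega]
    exact Set.mem_iInter₂.1 hmatch i (Finset.mem_range.2 (by omega))
  -- x is in the closure of every positive orbit of a point of S
  have horb : ∀ z ∈ S, S ⊆ closure (Set.range (fun n : ℕ+ => shiftT^[(n : ℕ)] z)) := by
    intro z hz
    set C := closure (Set.range (fun n : ℕ+ => shiftT^[(n : ℕ)] z)) with hC
    have hxC : x ∈ C := by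
      rw [mem_closure_iff_nhds]
      intro U hU
      obtain ⟨k, hk⟩ := cylinder_mem_nhds x U hU
      obtain ⟨n, hn1, hn2⟩ := hkey z hz k
      refine ⟨shiftT^[n] z, hk (fun i hi => hn2 i hi), ⟨⟨n, hn1⟩, rfl⟩⟩
    have hTC : ∀ w ∈ C, shiftT w ∈ C := by
      intro w hw
      have h1 : shiftT w ∈ shiftT '' C := ⟨w, hw, rfl⟩
      have h2 : shiftT '' C ⊆ closure (shiftT '' (Set.range (fun n : ℕ+ => shiftT^[(n : ℕ)] z))) :=
        image_closure_subset_closure_image shiftT_cont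
      refine closure_mono ?_ (h2 h1)
      rintro w' ⟨z', ⟨n, rfl⟩, rfl⟩
      refine ⟨n + 1, ?_⟩
      show shiftT^[((n + 1 : ℕ+) : ℕ)] z = shiftT (shiftT^[(n : ℕ)] z)
      rw [show ((n + 1 : ℕ+) : ℕ) = (n : ℕ) + 1 by push_cast; ring,
        Function.iterate_succ_apply']
    have hallm : ∀ m : ℕ, shiftT^[m] x ∈ C := by
      intro m
      induction m with
      | zero => exact hxC
      | succ m ih =>
        rw [Function.iterate_succ_apply']
        exact hTC _ ih
    refine closure_minimal ?_ isClosed_closure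
    rintro w ⟨m, rfl⟩
    exact hallm m
  -- build the subsystem
  have hScompact : IsCompact S := isClosed_closure.isCompact
  have hSnonempty : S.Nonempty := ⟨x, hxS⟩
  let Xs := {z : ℕ → Bool // z ∈ S}
  haveI : CompactSpace Xs := isCompact_iff_compactSpace.1 hScompact
  haveI : Nonempty Xs := ⟨⟨x, hxS⟩⟩
  let Ts : Xs → Xs := fun z => ⟨shiftT z.val, hTS z.val z.property⟩
  have hTscont : Continuous Ts := (shiftT_cont.comp continuous_subtype_val).subtype_mk _
  have hTsiter : ∀ (n : ℕ) (z : Xs), (Ts^[n] z).val = shiftT^[n] z.val := by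
    intro n
    induction n with
    | zero => intro z; rfl
    | succ n ih =>
      intro z
      rw [Function.iterate_succ_apply', Function.iterate_succ_apply']
      show shiftT (Ts^[n] z).val = _
      rw [ih]
  have hmin : MinimalMap Ts := by
    intro y z
    rw [closure_subtype]
    have himg : Subtype.val '' (Set.range fun n : ℕ+ => Ts^[(n : ℕ)] y)
        = Set.range (fun n : ℕ+ => shiftT^[(n : ℕ)] y.val) := by
      ext w
      constructor
      · rintro ⟨w', ⟨n, rfl⟩, rfl⟩
        exact ⟨n, (hTsiter _ _).symm⟩
      · rintro ⟨n, rfl⟩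
        exact ⟨Ts^[(n : ℕ)] y, ⟨n, rfl⟩, hTsiter _ _⟩
    rw [himg]
    exact horb y.val y.property z.property
  refine ⟨⟨Xs, Ts, hTscont, hmin⟩, ⟨x, hxS⟩, {z : Xs | z.val 0 = true}, ?_, hx0, ?_⟩
  · have h1 : IsOpen {w : ℕ → Bool | w 0 = true} := by
      have he : {w : ℕ → Bool | w 0 = true} = (fun w : ℕ → Bool => w 0) ⁻¹' {true} := rfl
      rw [he]
      exact IsOpen.preimage (continuous_apply 0) (isOpen_discrete {true})
    exact IsOpen.preimage continuous_subtype_val h1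
  · intro n hn
    have hn' : (shiftT^[(n : ℕ)] x) 0 = true := by
      have := hn
      simp only [retTimes, Set.mem_setOf_eq] at this
      rwa [hTsiter] at this
    rw [shiftT_iter] at hn'
    simp only [Nat.zero_add] at hn'
    rcases hsupp (n : ℕ) hn' with hc | ⟨hp, hmem⟩
    · exact absurd hc (by exact_mod_cast n.ne_zero)
    · have he : (⟨(n : ℕ), hp⟩ : ℕ+) = n := Subtype.ext rfl
      rwa [he] at hmem


end Dyn

section Bridge

lemma two_imp_one {A B : Set ℕ+} (hBA : B ⊆ A)
    (h : ∀ F : Finset ℕ+, (F : Set ℕ+) ⊆ B → Syndetic (B ∩ ⋂ f ∈ F, shiftN B f)) :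
    DynCentralSyndetic A := by
  classical
  set B' : Set ℕ := {n : ℕ | ∃ hp : 0 < n, (⟨n, hp⟩ : ℕ+) ∈ B} with hB'
  have hyp : ∀ x : ℕ → Bool, x 0 = true → (∀ i, x i = true → i = 0 ∨ i ∈ B') →
      ∀ L, 1 ≤ L → ∃ g, 1 ≤ g ∧ ∀ a, ∃ q, q ∈ DCS.Sset B' x L ∧ a ≤ q ∧ q ≤ a + g := by
    intro x hx0 hsupp L hL
    set F : Finset ℕ+ := ((Finset.range L).filter (fun i => 0 < i ∧ x i = true)).attach.image
      (fun i => (⟨i.1, ((Finset.mem_filter.1 i.2).2).1⟩ : ℕ+)) with hF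
    have hFB : (F : Set ℕ+) ⊆ B := by
      intro f hf
      simp only [hF, Finset.coe_image, Set.mem_image, Finset.mem_coe, Finset.mem_attach,
        true_and] at hf
      obtain ⟨i, _, rfl⟩ := Finset.mem_image.1 hf
      have hi := Finset.mem_filter.1 i.2
      rcases hsupp i.1 hi.2.2 with h0 | hB'mem
      · omega
      · obtain ⟨hp, hmem⟩ := hB'mem
        exact hmem
    obtain ⟨N, hN⟩ := h F hFB
    refine ⟨(N : ℕ) + 1, by omega, fun a => ?_⟩
    have hm : (⟨a+1, by omega⟩ : ℕ+) ∈ (B ∩ ⋂ f ∈ F, shiftN B f) ∪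
        ⋃ k ∈ {k : ℕ+ | k ≤ N}, shiftN (B ∩ ⋂ f ∈ F, shiftN B f) k := by
      rw [hN]; trivial
    have key : ∃ p : ℕ+, p ∈ B ∩ ⋂ f ∈ F, shiftN B f ∧ a + 1 ≤ (p : ℕ) ∧
        (p : ℕ) ≤ a + 1 + (N : ℕ) := by
      rcases hm with hm | hm
      · exact ⟨⟨a+1, by omega⟩, hm, by simp, by simp⟩
      · obtain ⟨k, hk, hmk⟩ := Set.mem_iUnion₂.1 hm
        refine ⟨⟨a+1, by omega⟩ + k, hmk, ?_, ?_⟩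
        · have : ((⟨a+1, by omega⟩ + k : ℕ+) : ℕ) = a + 1 + (k : ℕ) := by
            exact PNat.add_coe _ _
          omega
        · have h1 : ((⟨a+1, by omega⟩ + k : ℕ+) : ℕ) = a + 1 + (k : ℕ) := by
            exact PNat.add_coe _ _
          have h2 : (k : ℕ) ≤ (N : ℕ) := hk
          omega
    obtain ⟨p, hpmem, hp1, hp2⟩ := key
    have hpB : p ∈ B := hpmem.1
    refine ⟨(p : ℕ), ⟨by omega, fun i hi hxi => ?_⟩, by omega, by omega⟩
    by_cases hi0 : i = 0
    · subst hi0
      refine ⟨by omega, ?_⟩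
      have he : (⟨(p : ℕ) + 0, by omega⟩ : ℕ+) = p := Subtype.ext rfl
      rw [he]
      exact hpB
    · have hipos : 0 < i := by omega
      obtain ⟨fi, hfival⟩ : ∃ fi : ℕ+, (fi : ℕ) = i := ⟨⟨i, hipos⟩, rfl⟩
      have hfi : fi ∈ F := by
        rw [hF]
        refine Finset.mem_image.2 ⟨⟨i, Finset.mem_filter.2 ⟨Finset.mem_range.2 hi,
          hipos, hxi⟩⟩, Finset.mem_attach _ _, ?_⟩
        exact Subtype.ext hfival.symm
      have hadd : p + fi ∈ B := (Set.mem_iInter₂.1 hpmem.2) fi hfi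
      refine ⟨by omega, ?_⟩
      have he : (⟨(p : ℕ) + i, by omega⟩ : ℕ+) = p + fi := by
        apply Subtype.ext
        show (p : ℕ) + i = ((p + fi : ℕ+) : ℕ)
        rw [PNat.add_coe, hfival]
      rw [he]
      exact hadd
  -- apply the construction and the dynamical realization
  apply dyn_from_point A (DCS.xinf B') (DCS.xinf_zero hyp)
  · intro n hn
    rcases DCS.xinf_supp hyp n hn with h0 | hmem
    · exact Or.inl h0
    · obtain ⟨hp, hmemB⟩ := hmem
      exact Or.inr ⟨hp, hBA hmemB⟩
  · intro k
    refine ⟨2 * DCS.gbnd hyp (k+1) + 3 * DCS.Lv B' (k+1) + 1 + 1, by omega, fun c => ?_⟩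
    obtain ⟨n, hn1, hn2, hn3⟩ := DCS.global_occ hyp (j := k+1) (by omega) (c + 1)
    have hLv : k + 2 ≤ DCS.Lv B' (k+1) := DCS.Lv_ge hyp (k+1)
    refine ⟨n, by omega, by omega, fun i hik => ?_⟩
    exact hn3 i (by omega)

end Bridge

end Aux

/-- **Theorem B.** For `A ⊆ ℕ` the following are equivalent:
(1) `A` is dynamically central syndetic;
(2) there is `B ⊆ A` such that for every finite `F ⊆ B` the set
    `B ∩ ⋂_{f ∈ F} (B − f)` is syndetic;
(3) `A` belongs to a syndetic, idempotent filter. -/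
theorem dynCentralSyndetic_tfae (A : Set ℕ+) :
    (DynCentralSyndetic A ↔
      ∃ B : Set ℕ+, B ⊆ A ∧
        ∀ F : Finset ℕ+, (F : Set ℕ+) ⊆ B → Syndetic (B ∩ ⋂ f ∈ F, shiftN B f)) ∧
    (DynCentralSyndetic A ↔
      ∃ 𝓕 : Set (Set ℕ+),
        IsFilterFamily 𝓕 ∧ SyndeticFamily 𝓕 ∧ IdempotentFamily 𝓕 ∧ A ∈ 𝓕) := by
  have h12 : ∀ A : Set ℕ+, DynCentralSyndetic A →
      ∃ B : Set ℕ+, B ⊆ A ∧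
        ∀ F : Finset ℕ+, (F : Set ℕ+) ⊆ B → Syndetic (B ∩ ⋂ f ∈ F, shiftN B f) :=
    fun A h => one_imp_two h
  constructor
  · constructor
    · exact h12 A
    · rintro ⟨B, hBA, h⟩
      exact two_imp_one hBA h
  · constructor
    · intro h1
      obtain ⟨B, hBA, h⟩ := h12 A h1
      exact two_imp_three hBA h
    · rintro ⟨𝓕, hfil, hsyn, hide, hA⟩
      obtain ⟨B, hBA, h⟩ := three_imp_two hfil hsyn hide hA
      exact two_imp_one hBA h
end

section
/- Let A ⊆ ℕ. Then A is dynamically syndetic if and only if there exists a nonempty subset B ⊆ A such that the point 1_B is uniformly recurrent in the full shift ({0,1}^{ℕ}, σ). -/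
open Set

/-- The shift map on the full shift `{0,1}^{ℕ}` (indexed by the positive integers). -/
def shiftMapP : (ℕ+ → Bool) → (ℕ+ → Bool) := fun ω i => ω (i + 1)

/-- A point is uniformly recurrent if its return-time set to every open neighborhood is
syndetic. -/
def UniformlyRecurrent {X : Type} [TopologicalSpace X] (T : X → X) (x : X) : Prop :=
  ∀ U : Set X, IsOpen U → x ∈ U → Syndetic (retTimes T x U)

open scoped Classical in
/-- The indicator function `1_B ∈ {0,1}^{ℕ}` of a set `B` of positive integers. -/
noncomputable def indP (B : Set ℕ+) : ℕ+ → Bool :=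
  fun i => if i ∈ B then true else false

section Helpers

lemma indP_eq_true {B : Set ℕ+} {i : ℕ+} : indP B i = true ↔ i ∈ B := by
  simp [indP]

lemma shift_iter : ∀ (n : ℕ) (w : ℕ+ → Bool) (i : ℕ+),
    shiftMapP^[n] w i = w ⟨(i:ℕ) + n, Nat.add_pos_left i.2 n⟩ := by
  intro n
  induction n with
  | zero => intro w i; exact congrArg w (PNat.coe_injective (by simp))
  | succ n ih =>
      intro w i
      rw [Function.iterate_succ_apply, ih (shiftMapP w) i]
      show w _ = w _
      exact congrArg w (PNat.coe_injective (by exact Nat.add_assoc (i:ℕ) n 1))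

lemma shift_iterP (n : ℕ+) (w : ℕ+ → Bool) (i : ℕ+) :
    shiftMapP^[(n:ℕ)] w i = w (i + n) := by
  rw [shift_iter]; exact congrArg w (PNat.coe_injective (by rw [PNat.add_coe]; rfl))

lemma continuous_shiftMapP : Continuous shiftMapP :=
  continuous_pi fun i => continuous_apply (i + 1)

lemma syndetic_of_gaps {A : Set ℕ+} (h : ∃ N : ℕ+, ∀ m : ℕ+, ∃ k : ℕ+, k ≤ N ∧ m + k ∈ A) :
    Syndetic A := by
  obtain ⟨N, hN⟩ := h
  refine ⟨N, Set.eq_univ_of_forall fun m => ?_⟩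
  obtain ⟨k, hk, hm⟩ := hN m
  exact Or.inr (Set.mem_biUnion hk hm)

lemma gaps_of_syndetic {A : Set ℕ+} (h : Syndetic A) :
    ∃ N : ℕ+, ∀ m : ℕ+, ∃ k : ℕ+, k ≤ N ∧ m + k ∈ A := by
  obtain ⟨N, hN⟩ := h
  refine ⟨N + 1, fun m => ?_⟩
  have : m + 1 ∈ A ∪ ⋃ k ∈ {k : ℕ+ | k ≤ N}, shiftN A k := hN ▸ Set.mem_univ _
  rcases this with h1 | h1
  · exact ⟨1, (N + 1).one_le, h1⟩
  · obtain ⟨k, hk, hmk⟩ := Set.mem_iUnion₂.mp h1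
    refine ⟨k + 1, add_le_add_left hk 1, ?_⟩
    have he : m + (k + 1) = (m + 1) + k := by ring
    rw [he]; exact hmk

lemma syndetic_nonempty {A : Set ℕ+} (h : Syndetic A) : A.Nonempty := by
  obtain ⟨N, hN⟩ := gaps_of_syndetic h
  obtain ⟨k, _, hk⟩ := hN 1
  exact ⟨1 + k, hk⟩

def orbitP {X : Type} (T : X → X) (x : X) : Set X := Set.range fun n : ℕ+ => T^[(n:ℕ)] x

lemma orbitP_nonempty {X : Type} (T : X → X) (x : X) : (orbitP T x).Nonempty :=
  ⟨T^[1] x, ⟨1, rfl⟩⟩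

lemma iterate_mem_orbitP {X : Type} (T : X → X) (x : X) (n : ℕ+) :
    T^[(n:ℕ)] x ∈ orbitP T x := ⟨n, rfl⟩

lemma mapsTo_orbitP {X : Type} (T : X → X) (x : X) : Set.MapsTo T (orbitP T x) (orbitP T x) := by
  rintro z ⟨n, rfl⟩
  refine ⟨n + 1, ?_⟩
  show T^[((n + 1 : ℕ+) : ℕ)] x = T (T^[(n:ℕ)] x)
  rw [PNat.add_coe, PNat.one_coe, Function.iterate_succ_apply']

lemma mapsTo_closure_orbitP {X : Type} [TopologicalSpace X] {T : X → X} (hT : Continuous T)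
    (x : X) : Set.MapsTo T (closure (orbitP T x)) (closure (orbitP T x)) :=
  (mapsTo_orbitP T x).closure hT

/-- Zorn: existence of a minimal subsystem inside a compact invariant set. -/
lemma exists_min_subsystem {Y : Type} [TopologicalSpace Y] {G : Y → Y}
    {Z : Set Y} (hZc : IsCompact Z) (hZcl : IsClosed Z) (hZne : Z.Nonempty)
    (hZinv : Set.MapsTo G Z Z) :
    ∃ M, M ⊆ Z ∧ M.Nonempty ∧ IsClosed M ∧ Set.MapsTo G M M ∧
      ∀ C, C ⊆ M → C.Nonempty → IsClosed C → Set.MapsTo G C C → C = M := by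
  set S : Set (Set Y) := {C | C ⊆ Z ∧ C.Nonempty ∧ IsClosed C ∧ Set.MapsTo G C C} with hS
  have hzorn := zorn_superset_nonempty S ?_ Z ⟨le_refl Z, hZne, hZcl, hZinv⟩
  · obtain ⟨M, hMZ, hMmin⟩ := hzorn
    obtain ⟨hM1, hM2, hM3, hM4⟩ := hMmin.1
    refine ⟨M, hM1, hM2, hM3, hM4, fun C hCM hCne hCcl hCinv => ?_⟩
    exact le_antisymm hCM (hMmin.2 ⟨hCM.trans hM1, hCne, hCcl, hCinv⟩ hCM)
  · intro c hcS hchain hcne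
    refine ⟨⋂₀ c, ?_, fun s hs => Set.sInter_subset_of_mem hs⟩
    obtain ⟨s0, hs0⟩ := hcne
    have hcl : ∀ s ∈ c, IsClosed s := fun s hs => (hcS hs).2.2.1
    have hcompact : ∀ s ∈ c, IsCompact s := fun s hs =>
      hZc.of_isClosed_subset (hcl s hs) (hcS hs).1
    have hne : (⋂₀ c).Nonempty := by
      haveI : Nonempty ↑c := nonempty_subtype.mpr ⟨s0, hs0⟩
      refine IsCompact.nonempty_sInter_of_directed_nonempty_isCompact_isClosed ?_
        (fun s hs => (hcS hs).2.1) hcompact hcl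
      intro a ha b hb
      rcases hchain.total ha hb with h | h
      · exact ⟨a, ha, le_refl _, h⟩
      · exact ⟨b, hb, h, le_refl _⟩
    refine ⟨(Set.sInter_subset_of_mem hs0).trans (hcS hs0).1, hne,
      isClosed_sInter hcl, ?_⟩
    intro z hz s hs
    exact (hcS hs).2.2.2 (hz s hs)

/-- From a cover of a compact set by iterated preimages, extract a uniform bound. -/
lemma compact_cover_bound {Y : Type} [TopologicalSpace Y] {T : Y → Y} (hT : Continuous T)
    {M : Set Y} (hMc : IsCompact M) {W : Set Y} (hW : IsOpen W)
    (hcov : ∀ q ∈ M, ∃ n : ℕ+, T^[(n:ℕ)] q ∈ W) :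
    ∃ N : ℕ+, ∀ q ∈ M, ∃ k : ℕ+, k ≤ N ∧ T^[(k:ℕ)] q ∈ W := by
  have hsub : M ⊆ ⋃ n : ℕ+, T^[(n:ℕ)] ⁻¹' W := by
    intro q hq
    obtain ⟨n, hn⟩ := hcov q hq
    exact Set.mem_iUnion.mpr ⟨n, hn⟩
  obtain ⟨t, ht⟩ := hMc.elim_finite_subcover _
    (fun n : ℕ+ => (hT.iterate _).isOpen_preimage W hW) hsub
  refine ⟨(t.sup fun n => (n:ℕ)).toPNat', fun q hq => ?_⟩
  obtain ⟨n, hnt, hn⟩ := Set.mem_iUnion₂.mp (ht hq)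
  refine ⟨n, ?_, hn⟩
  have h1 : (n:ℕ) ≤ t.sup fun n => (n:ℕ) := Finset.le_sup hnt
  have h2 : (n:ℕ) ≤ ((t.sup fun n => (n:ℕ)).toPNat' : ℕ) := by
    rcases Nat.eq_zero_or_pos (t.sup fun n => (n:ℕ)) with h | h
    · omega
    · rwa [Nat.toPNat'_coe, if_pos h]
  exact_mod_cast h2

/-- In a minimal subsystem, return times to an open set are syndetic with a bound. -/
lemma minimal_ret {Y : Type} [TopologicalSpace Y] {G : Y → Y} (hG : Continuous G)
    {M : Set Y} (hMc : IsCompact M) (hMcl : IsClosed M) (hInv : Set.MapsTo G M M)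
    (hmin : ∀ C, C ⊆ M → C.Nonempty → IsClosed C → Set.MapsTo G C C → C = M)
    {p : Y} (hp : p ∈ M) {W : Set Y} (hW : IsOpen W) (hpW : p ∈ W) :
    ∃ N : ℕ+, ∀ q ∈ M, ∃ k : ℕ+, k ≤ N ∧ G^[(k:ℕ)] q ∈ W := by
  refine compact_cover_bound hG hMc hW ?_
  intro q hq
  have horb : orbitP G q ⊆ M := by
    rintro z ⟨n, rfl⟩
    exact hInv.iterate (n:ℕ) hq
  have hCM : closure (orbitP G q) = M :=
    hmin _ (hMcl.closure_subset_iff.mpr horb)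
      ((orbitP_nonempty G q).closure) isClosed_closure (mapsTo_closure_orbitP hG q)
  have hpcl : p ∈ closure (orbitP G q) := hCM ▸ hp
  obtain ⟨z, hzW, n, rfl⟩ := mem_closure_iff.mp hpcl W hW hpW
  exact ⟨n, hzW⟩

end Helpers

lemma forward_dir (A : Set ℕ+) (h : DynSyndetic A) :
    ∃ B : Set ℕ+, B ⊆ A ∧ B.Nonempty ∧ UniformlyRecurrent shiftMapP (indP B) := by
  classical
  obtain ⟨S, x, U, hUo, hUne, hsub⟩ := h
  -- a point of U on the orbit of x
  obtain ⟨z, hzorb, hzU⟩ := (S.minimal x).exists_mem_open hUo hUne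
  obtain ⟨n0, rfl⟩ := hzorb
  set y := S.T^[((n0 : ℕ+):ℕ)] x with hy
  obtain ⟨r, hr, hball⟩ := Metric.isOpen_iff.mp hUo y hzU
  set V : Set S.X := Metric.ball y (r/2) with hV
  have hVo : IsOpen V := Metric.isOpen_ball
  have hyV : y ∈ V := Metric.mem_ball_self (by linarith)
  have hclV : closure V ⊆ U := by
    refine subset_trans Metric.closure_ball_subset_closedBall ?_ |>.trans hball
    exact Metric.closedBall_subset_ball (by linarith)
  -- uniform bound for hitting V
  have hcov : ∀ z ∈ (Set.univ : Set S.X), ∃ n : ℕ+, S.T^[(n:ℕ)] z ∈ V := by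
    intro z _
    obtain ⟨w, ⟨n, rfl⟩, hw⟩ := (S.minimal z).exists_mem_open hVo ⟨y, hyV⟩
    exact ⟨n, hw⟩
  obtain ⟨N, hN⟩ := compact_cover_bound S.cont isCompact_univ hVo hcov
  set R : Set ℕ+ := retTimes S.T x V with hR
  have hRgap : ∀ m : ℕ+, ∃ k : ℕ+, k ≤ N ∧ m + k ∈ R := by
    intro m
    obtain ⟨k, hk, hkV⟩ := hN (S.T^[(m:ℕ)] x) (Set.mem_univ _)
    refine ⟨k, hk, ?_⟩
    show S.T^[((m+k:ℕ+):ℕ)] x ∈ V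
    rw [PNat.add_coe, Nat.add_comm, Function.iterate_add_apply]
    exact hkV
  -- joint system
  set ω0 : ℕ+ → Bool := indP R with hω0
  set G : S.X × (ℕ+ → Bool) → S.X × (ℕ+ → Bool) := Prod.map S.T shiftMapP with hG
  have hGc : Continuous G := S.cont.prodMap continuous_shiftMapP
  have hGit : ∀ (n : ℕ) (a : S.X) (b : ℕ+ → Bool),
      G^[n] (a, b) = (S.T^[n] a, shiftMapP^[n] b) := by
    intro n a b
    rw [hG, Prod.map_iterate]; rfl
  set p0 : S.X × (ℕ+ → Bool) := (x, ω0) with hp0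
  set Z := closure (orbitP G p0) with hZ
  have hZcl : IsClosed Z := isClosed_closure
  have hZc : IsCompact Z := hZcl.isCompact
  obtain ⟨M, hMZ, hMne, hMcl, hMinv, hMmin⟩ :=
    exists_min_subsystem hZc hZcl (orbitP_nonempty G p0).closure (mapsTo_closure_orbitP hGc p0)
  have hMcomp : IsCompact M := hZc.of_isClosed_subset hMcl hMZ
  -- find a point of M over x
  have hxC : ∃ ωm : ℕ+ → Bool, (x, ωm) ∈ M := by
    set C := Prod.fst '' M with hC
    have hCcl : IsClosed C := (hMcomp.image continuous_fst).isClosed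
    have hCinv : Set.MapsTo S.T C C := by
      rintro z ⟨q, hq, rfl⟩
      exact ⟨G q, hMinv hq, rfl⟩
    obtain ⟨q0, hq0⟩ := hMne
    have hq0C : q0.1 ∈ C := ⟨q0, hq0, rfl⟩
    have horbC : orbitP S.T q0.1 ⊆ C := by
      rintro z ⟨n, rfl⟩
      exact hCinv.iterate ((n : ℕ+):ℕ) hq0C
    have hclC : closure (orbitP S.T q0.1) ⊆ C := hCcl.closure_subset_iff.mpr horbC
    have hxcl : x ∈ closure (orbitP S.T q0.1) := by
      rw [orbitP, (S.minimal q0.1).closure_eq]; trivial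
    obtain ⟨q, hqM, hq1⟩ := hclC hxcl
    exact ⟨q.2, by rwa [← hq1, Prod.mk.eta]⟩
  obtain ⟨ωm, hxωm⟩ := hxC
  set B : Set ℕ+ := {n : ℕ+ | ωm n = true} with hB
  have hind : indP B = ωm := by
    funext i
    rcases Bool.eq_false_or_eq_true (ωm i) with hb | hb <;> simp [indP, hB, hb]
  -- B ⊆ A
  have hBA : B ⊆ A := by
    intro n hn
    have hcl : S.T^[(n:ℕ)] x ∈ closure V := by
      rw [mem_closure_iff]
      intro O hOo hO
      set W : Set (S.X × (ℕ+ → Bool)) :=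
        (S.T^[(n:ℕ)] ⁻¹' O) ×ˢ ((fun w : ℕ+ → Bool => w n) ⁻¹' {true}) with hW
      have hWo : IsOpen W :=
        ((S.cont.iterate _).isOpen_preimage _ hOo).prod
          ((continuous_apply n).isOpen_preimage _ (isOpen_discrete _))
      have hmem : (x, ωm) ∈ W := ⟨hO, hn⟩
      have hxZ : (x, ωm) ∈ Z := hMZ hxωm
      obtain ⟨z, hzW, hzorb⟩ := mem_closure_iff.mp hxZ W hWo hmem
      obtain ⟨m, rfl⟩ := hzorb
      have hzW' : G^[((m:ℕ+):ℕ)] (x, ω0) ∈ W := hzW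
      rw [hGit] at hzW'
      obtain ⟨hz1, hz2⟩ := hzW'
      refine ⟨S.T^[(n:ℕ)] (S.T^[((m:ℕ+):ℕ)] x), hz1, ?_⟩
      have he1 : shiftMapP^[((m:ℕ+):ℕ)] ω0 n = ω0 (n + m) := shift_iterP m ω0 n
      have hz2' : ω0 (n + m) = true := by rw [← he1]; exact hz2
      have hRmem : (n + m) ∈ R := indP_eq_true.mp hz2'
      have he2 : S.T^[((n+m:ℕ+):ℕ)] x = S.T^[(n:ℕ)] (S.T^[((m:ℕ+):ℕ)] x) := by
        rw [PNat.add_coe, Function.iterate_add_apply]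
      exact he2 ▸ hRmem
    exact hsub (show S.T^[(n:ℕ)] x ∈ U from hclV hcl)
  -- B nonempty
  have hBne : B.Nonempty := by
    set D : Set (S.X × (ℕ+ → Bool)) :=
      ⋃ k ∈ {k : ℕ+ | k ≤ N}, {p : S.X × (ℕ+ → Bool) | p.2 k = true} with hD
    have hfin : ({k : ℕ+ | k ≤ N}).Finite := by
      have : {k : ℕ+ | k ≤ N} = (fun k : ℕ+ => (k:ℕ)) ⁻¹' Set.Iic (N:ℕ) := by
        ext k; simp
      rw [this]
      exact Set.Finite.preimage (fun a _ b _ h => PNat.coe_injective h) (Set.finite_Iic _)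
    have hDcl : IsClosed D := by
      refine Set.Finite.isClosed_biUnion hfin ?_
      intro k _
      exact isClosed_eq ((continuous_apply k).comp continuous_snd) continuous_const
    have horbD : orbitP G p0 ⊆ D := by
      rintro z ⟨m, rfl⟩
      show G^[((m:ℕ+):ℕ)] (x, ω0) ∈ D
      rw [hGit]
      obtain ⟨k, hk, hmk⟩ := hRgap m
      refine Set.mem_biUnion hk ?_
      show shiftMapP^[((m:ℕ+):ℕ)] ω0 k = true
      rw [shift_iterP]
      exact indP_eq_true.mpr (by rwa [add_comm] at hmk)
    have hZD : Z ⊆ D := hDcl.closure_subset_iff.mpr horbD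
    obtain ⟨k, -, hk⟩ := Set.mem_iUnion₂.mp (hZD (hMZ hxωm))
    exact ⟨k, hk⟩
  -- uniform recurrence
  have hur : UniformlyRecurrent shiftMapP ωm := by
    intro U' hU'o hU'
    apply syndetic_of_gaps
    have hWo : IsOpen ((Set.univ : Set S.X) ×ˢ U') := isOpen_univ.prod hU'o
    have hpW : (x, ωm) ∈ (Set.univ : Set S.X) ×ˢ U' := ⟨trivial, hU'⟩
    obtain ⟨N', hN'⟩ := minimal_ret hGc hMcomp hMcl hMinv hMmin hxωm hWo hpW
    refine ⟨N', fun m => ?_⟩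
    have hq : G^[(m:ℕ)] (x, ωm) ∈ M := hMinv.iterate _ hxωm
    obtain ⟨k, hk, hkW⟩ := hN' _ hq
    refine ⟨k, hk, ?_⟩
    show shiftMapP^[((m+k:ℕ+):ℕ)] ωm ∈ U'
    have he : shiftMapP^[((m+k:ℕ+):ℕ)] ωm = (G^[(k:ℕ)] (G^[(m:ℕ)] (x, ωm))).2 := by
      rw [← Function.iterate_add_apply, hGit, PNat.add_coe, Nat.add_comm]
    rw [he]
    exact hkW.2
  exact ⟨B, hBA, hBne, hind ▸ hur⟩

lemma reverse_dir (A : Set ℕ+)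
    (h : ∃ B : Set ℕ+, B ⊆ A ∧ B.Nonempty ∧ UniformlyRecurrent shiftMapP (indP B)) :
    DynSyndetic A := by
  classical
  obtain ⟨B, hBA, hBne, hur⟩ := h
  set ω : ℕ+ → Bool := indP B with hω
  set Xs : Set (ℕ+ → Bool) := closure (orbitP shiftMapP ω) with hXs
  have hXcl : IsClosed Xs := isClosed_closure
  have hXinv : Set.MapsTo shiftMapP Xs Xs := mapsTo_closure_orbitP continuous_shiftMapP ω
  -- ω belongs to its own (strict) orbit closure
  have hωX : ω ∈ Xs := by
    rw [hXs, mem_closure_iff]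
    intro O hOo hO
    obtain ⟨N, hN⟩ := gaps_of_syndetic (hur O hOo hO)
    obtain ⟨k, _, hk⟩ := hN 1
    exact ⟨shiftMapP^[((1 + k : ℕ+):ℕ)] ω, hk, iterate_mem_orbitP _ _ _⟩
  -- every point of a neighborhood basis argument: uniform hitting of nbhds of ω
  have hstep : ∀ O : Set (ℕ+ → Bool), IsOpen O → ω ∈ O →
      ∀ z ∈ Xs, ∃ k : ℕ+, shiftMapP^[(k:ℕ)] z ∈ O := by
    intro O hOo hO
    obtain ⟨t, htn, htc, htO⟩ := exists_mem_nhds_isClosed_subset (hOo.mem_nhds hO)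
    set V : Set (ℕ+ → Bool) := interior t with hV
    have hVo : IsOpen V := isOpen_interior
    have hωV : ω ∈ V := mem_interior_iff_mem_nhds.mpr htn
    have hclV : closure V ⊆ O := (htc.closure_subset_iff.mpr interior_subset).trans htO
    obtain ⟨N, hN⟩ := gaps_of_syndetic (hur V hVo hωV)
    set C : Set (ℕ+ → Bool) :=
      ⋃ k ∈ {k : ℕ+ | k ≤ N}, shiftMapP^[(k:ℕ)] ⁻¹' (closure V) with hC
    have hfin : ({k : ℕ+ | k ≤ N}).Finite := by
      have he : {k : ℕ+ | k ≤ N} = (fun k : ℕ+ => (k:ℕ)) ⁻¹' Set.Iic (N:ℕ) := by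
        ext k; simp
      rw [he]
      exact Set.Finite.preimage (fun a _ b _ hab => PNat.coe_injective hab) (Set.finite_Iic _)
    have hCcl : IsClosed C := Set.Finite.isClosed_biUnion hfin fun k _ =>
      IsClosed.preimage (continuous_shiftMapP.iterate _) isClosed_closure
    have horbC : orbitP shiftMapP ω ⊆ C := by
      rintro u ⟨m, rfl⟩
      obtain ⟨k, hk, hmk⟩ := hN m
      refine Set.mem_biUnion hk ?_
      show shiftMapP^[(k:ℕ)] (shiftMapP^[((m:ℕ+):ℕ)] ω) ∈ closure V
      rw [← Function.iterate_add_apply,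
        show (k:ℕ) + (m:ℕ) = ((m + k : ℕ+):ℕ) from by rw [PNat.add_coe]; ring]
      exact subset_closure hmk
    intro z hz
    have hzC : z ∈ C := (hCcl.closure_subset_iff.mpr horbC) hz
    obtain ⟨k, _, hk⟩ := Set.mem_iUnion₂.mp hzC
    exact ⟨k, hclV hk⟩
  -- minimality of Xs
  have hmin : ∀ z ∈ Xs, Xs ⊆ closure (orbitP shiftMapP z) := by
    intro z hz
    have hωcl : ω ∈ closure (orbitP shiftMapP z) := by
      rw [mem_closure_iff]
      intro O hOo hO
      obtain ⟨k, hk⟩ := hstep O hOo hO z hz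
      exact ⟨_, hk, iterate_mem_orbitP _ _ k⟩
    have horb : orbitP shiftMapP ω ⊆ closure (orbitP shiftMapP z) := by
      rintro u ⟨n, rfl⟩
      exact ((mapsTo_closure_orbitP continuous_shiftMapP z).iterate ((n:ℕ+):ℕ)) hωcl
    exact isClosed_closure.closure_subset_iff.mpr horb
  -- the minimal system on Xs
  haveI hne' : Nonempty ↥Xs := ⟨⟨ω, hωX⟩⟩
  haveI hcpt : CompactSpace ↥Xs := isCompact_iff_compactSpace.mp hXcl.isCompact
  letI metX : MetricSpace ↥Xs := TopologicalSpace.metrizableSpaceMetric ↥Xs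
  set T : ↥Xs → ↥Xs := fun z => ⟨shiftMapP z.1, hXinv z.2⟩ with hT
  have hTc : Continuous T :=
    Continuous.subtype_mk (continuous_shiftMapP.comp continuous_subtype_val) _
  have hTit : ∀ (n : ℕ) (z : ↥Xs), (T^[n] z).1 = shiftMapP^[n] z.1 := by
    intro n
    induction n with
    | zero => intro z; rfl
    | succ n ih =>
        intro z
        rw [Function.iterate_succ_apply', Function.iterate_succ_apply']
        exact congrArg shiftMapP (ih z)
  have hminimal : MinimalMap T := by
    intro z
    refine dense_iff_closure_eq.mpr (Set.eq_univ_iff_forall.mpr fun p => ?_)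
    rw [closure_subtype]
    have himg : Subtype.val '' (Set.range fun n : ℕ+ => T^[(n:ℕ)] z) =
        orbitP shiftMapP z.1 := by
      ext u
      constructor
      · rintro ⟨v, ⟨n, rfl⟩, rfl⟩
        exact ⟨n, (hTit _ z).symm⟩
      · rintro ⟨n, rfl⟩
        exact ⟨T^[((n:ℕ+):ℕ)] z, ⟨n, rfl⟩, hTit _ z⟩
    rw [himg]
    exact hmin z.1 z.2 p.2
  set Sys : MinSystem := { X := ↥Xs, T := T, cont := hTc, minimal := hminimal } with hSys
  -- a preimage of ω inside Xs
  have hsurj : ∃ w ∈ Xs, shiftMapP w = ω := by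
    set Y2 : Set (ℕ+ → Bool) := shiftMapP '' Xs with hY2
    have hY2X : Y2 ⊆ Xs := by
      rintro u ⟨v, hv, rfl⟩
      exact hXinv hv
    have hY2cl : IsClosed Y2 := (hXcl.isCompact.image continuous_shiftMapP).isClosed
    have hz0 : shiftMapP ω ∈ Y2 := ⟨ω, hωX, rfl⟩
    have hY2inv : Set.MapsTo shiftMapP Y2 Y2 := by
      rintro u ⟨v, hv, rfl⟩
      exact ⟨shiftMapP v, hXinv hv, rfl⟩
    have horb : orbitP shiftMapP (shiftMapP ω) ⊆ Y2 := by
      rintro u ⟨n, rfl⟩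
      exact hY2inv.iterate ((n:ℕ+):ℕ) hz0
    have hXY2 : Xs ⊆ Y2 := by
      refine (hmin (shiftMapP ω) (hY2X hz0)).trans ?_
      exact hY2cl.closure_subset_iff.mpr horb
    exact hXY2 hωX
  obtain ⟨w, hw, hwω⟩ := hsurj
  set x : ↥Xs := ⟨w, hw⟩ with hx
  set U : Set ↥Xs := (fun z : ↥Xs => z.1 1) ⁻¹' {true} with hU
  have hUo : IsOpen U :=
    ((continuous_apply (1 : ℕ+)).comp continuous_subtype_val).isOpen_preimage _
      (isOpen_discrete _)
  have hUne : U.Nonempty := by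
    obtain ⟨b, hb⟩ := hBne
    refine ⟨⟨shiftMapP^[(b:ℕ)] w, hXinv.iterate _ hw⟩, ?_⟩
    show shiftMapP^[(b:ℕ)] w 1 = true
    rw [shift_iterP b w 1]
    have h2 : w (1 + b) = ω b := by
      rw [← hwω]
      show w (1 + b) = w (b + 1)
      rw [add_comm]
    rw [h2]
    show indP B b = true
    exact indP_eq_true.mpr hb
  have hret : retTimes T x U ⊆ A := by
    intro n hn
    have hv : shiftMapP^[(n:ℕ)] w 1 = true := by
      show shiftMapP^[(n:ℕ)] (x.1) 1 = true
      rw [← hTit]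
      exact hn
    have h1 : shiftMapP^[(n:ℕ)] w 1 = ω n := by
      rw [shift_iterP n w 1, ← hwω]
      show w (1 + n) = w (n + 1)
      rw [add_comm]
    have hωn : ω n = true := by rw [← h1]; exact hv
    have hBn : indP B n = true := hωn
    exact hBA (indP_eq_true.mp hBn)
  exact ⟨Sys, x, U, hUo, hUne, hret⟩

/-- A set `A ⊆ ℕ` is dynamically syndetic if and only if there is a nonempty `B ⊆ A` such
that `1_B` is uniformly recurrent in the full shift `({0,1}^{ℕ}, σ)`. -/
theorem dynSyndetic_symbolic (A : Set ℕ+) :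
    DynSyndetic A ↔
      ∃ B : Set ℕ+, B ⊆ A ∧ B.Nonempty ∧ UniformlyRecurrent shiftMapP (indP B) :=
  ⟨forward_dir A, reverse_dir A⟩
end
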